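/- Let a, b, c, d be integers with ad - bc = 1 and c > 0. Then ω(a,b,c,d) = (a+d)/c + 12·s(-d,c) is an integer, where s(-d,c) is the Dedekind sum. -/

import Mathlib

noncomputable def dedekindSum (h k : ℤ) : ℝ :=
  ∑ r ∈ Finset.Ico (1 : ℤ) k,
    ((r : ℝ) / k) * ((h * r : ℝ) / k - ⌊(h * r : ℝ) / k⌋ - 1 / 2)

/-!
Write `S = ∑_{r=1}^{c-1} r · (-d r mod c)`. Since `fract(-d r / c) = (-d r mod c) / c` and
`∑ r = c(c-1)/2`, one gets `ω = (12 S + (a + d) c) / c² - 3(c - 1)`, so it suffices that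
`c² ∣ 12 S + (a + d) c`. Each `-d r - (-d r mod c)` is a multiple of `c`, so `c²` divides the sum of
their squares; as `r ↦ -d r mod c` permutes `1, …, c - 1`, that sum is `(d² + 1) Q + 2 d S` with
`6 Q = c(c-1)(2c-1)`. Modulo `c²`, `(d² + 1) · c(c-1)(2c-1) ≡ d(a + d) c` because `ad ≡ 1 (mod c)`,
hence `c² ∣ d (12 S + (a + d) c)`, and `d` is prime to `c`.
-/

open Finset

lemma Int.fract_intCast_div_intCast {F : Type*} [Field F] [LinearOrder F] [IsStrictOrderedRing F]
    [FloorRing F] (m : ℤ) {k : ℤ} (hk : 0 ≤ k) :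
    Int.fract ((m : F) / k) = ((m % k : ℤ) : F) / k := by
  lift k to ℕ using hk
  rw [Int.cast_natCast]
  exact Int.fract_div_intCast_eq_div_intCast_mod

lemma sum_Ico_one_id_mul_two {k : ℤ} (hk : 0 < k) :
    (∑ r ∈ Ico 1 k, r) * 2 = k * (k - 1) := by
  induction k, hk using Int.leInduction with
  | base => simp
  | succ n hn ih => rw [← sum_Ico_add_eq_sum_Ico_add_one (a := 1) hn]; linear_combination ih

lemma sum_Ico_one_sq_mul_six {k : ℤ} (hk : 0 < k) :
    (∑ r ∈ Ico 1 k, r ^ 2) * 6 = k * (k - 1) * (2 * k - 1) := by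
  induction k, hk using Int.leInduction with
  | base => simp
  | succ n hn ih => rw [← sum_Ico_add_eq_sum_Ico_add_one (a := 1) hn]; linear_combination ih

lemma mul_emod_mem_Ico {g k r : ℤ} (hg : IsCoprime g k) (hr : r ∈ Ico 1 k) :
    g * r % k ∈ Ico 1 k := by
  rw [mem_Ico] at hr ⊢
  have hk : 0 < k := by omega
  refine ⟨?_, Int.emod_lt_of_pos _ hk⟩
  have hndvd : ¬ k ∣ g * r := fun hdvd =>
    absurd (Int.le_of_dvd (by omega) (hg.symm.dvd_of_dvd_mul_left hdvd)) (by omega)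
  exact (Int.emod_pos_of_not_dvd hndvd).resolve_left hk.ne'

lemma mul_emod_mul_emod_eq_self {g u k r : ℤ} (hug : u * g ≡ 1 [ZMOD k]) (hr : r ∈ Ico 1 k) :
    u * (g * r % k) % k = r := by
  rw [mem_Ico] at hr
  have hmod : u * (g * r % k) ≡ r [ZMOD k] :=
    calc u * (g * r % k) ≡ u * (g * r) [ZMOD k] := (Int.mod_modEq _ _).mul_left u
      _ = u * g * r := by ring
      _ ≡ 1 * r [ZMOD k] := hug.mul_right r
      _ = r := one_mul r
  rw [hmod, Int.emod_eq_of_lt (by omega) hr.2]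

lemma sum_Ico_comp_mul_emod {M : Type*} [AddCommMonoid M] (f : ℤ → M) {g k : ℤ}
    (hg : IsCoprime g k) :
    ∑ r ∈ Ico 1 k, f (g * r % k) = ∑ r ∈ Ico 1 k, f r := by
  obtain ⟨u, v, huv⟩ := hg
  have hu : IsCoprime u k := ⟨g, v, by linear_combination huv⟩
  have hug : u * g ≡ 1 [ZMOD k] := Int.modEq_iff_dvd.2 ⟨v, by linear_combination -huv⟩
  exact sum_nbij' (fun r => g * r % k) (fun r => u * r % k)
    (fun r hr => mul_emod_mem_Ico ⟨u, v, huv⟩ hr) (fun r hr => mul_emod_mem_Ico hu hr)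
    (fun r hr => mul_emod_mul_emod_eq_self hug hr)
    (fun r hr => mul_emod_mul_emod_eq_self (by simpa [mul_comm] using hug) hr) (fun _ _ => rfl)

noncomputable def dedekindSumNum (h k : ℤ) : ℤ := ∑ r ∈ Ico 1 k, r * (h * r % k)

lemma dedekindSum_eq {h k : ℤ} (hk : 0 < k) :
    dedekindSum h k = (dedekindSumNum h k : ℝ) / k ^ 2 - ((k : ℝ) - 1) / 4 := by
  have hk' : (k : ℝ) ≠ 0 := by positivity
  have hterm (r : ℤ) : ((r : ℝ) / k) * ((h * r : ℝ) / k - ⌊(h * r : ℝ) / k⌋ - 1 / 2)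
      = ((r * (h * r % k) : ℤ) : ℝ) / k ^ 2 - (r : ℝ) / (2 * k) := by
    have hfract := Int.fract_intCast_div_intCast (F := ℝ) (h * r) hk.le
    rw [Int.fract, Int.cast_mul] at hfract
    rw [hfract]
    push_cast
    field_simp
  have hgauss : (∑ r ∈ Ico 1 k, (r : ℝ)) * 2 = k * (k - 1) := by
    have := congrArg (Int.cast : ℤ → ℝ) (sum_Ico_one_id_mul_two hk)
    push_cast at this
    exact this
  rw [dedekindSum, sum_congr rfl fun r _ => hterm r, sum_sub_distrib, ← sum_div, ← sum_div,
    ← Int.cast_sum, ← dedekindSumNum]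
  field_simp
  linear_combination (-2 * (k : ℝ)) * hgauss

lemma sq_dvd_sub_twelve_mul_dedekindSumNum {h k : ℤ} (hk : 0 < k) (hhk : IsCoprime h k) :
    k ^ 2 ∣ (h ^ 2 + 1) * (k * (k - 1) * (2 * k - 1)) - 12 * h * dedekindSumNum h k := by
  have hsq : k ^ 2 ∣ ∑ r ∈ Ico 1 k, (h * r - h * r % k) ^ 2 :=
    dvd_sum fun r _ => pow_dvd_pow_of_dvd Int.dvd_self_sub_emod 2
  have hexpand : ∑ r ∈ Ico 1 k, (h * r - h * r % k) ^ 2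
      = h ^ 2 * ∑ r ∈ Ico 1 k, r ^ 2 - 2 * h * dedekindSumNum h k + ∑ r ∈ Ico 1 k, r ^ 2 :=
    calc ∑ r ∈ Ico 1 k, (h * r - h * r % k) ^ 2
        = ∑ r ∈ Ico 1 k, (h ^ 2 * r ^ 2 - 2 * h * (r * (h * r % k)) + (h * r % k) ^ 2) :=
          sum_congr rfl fun r _ => by ring
      _ = _ := by
          rw [sum_add_distrib, sum_sub_distrib, ← mul_sum, ← mul_sum, dedekindSumNum,
            sum_Ico_comp_mul_emod (· ^ 2) hhk]
  have hkey : (h ^ 2 + 1) * (k * (k - 1) * (2 * k - 1)) - 12 * h * dedekindSumNum h k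
      = (∑ r ∈ Ico 1 k, (h * r - h * r % k) ^ 2) * 6 := by
    rw [hexpand]
    linear_combination (-(h ^ 2 + 1)) * sum_Ico_one_sq_mul_six hk
  rw [hkey]
  exact dvd_mul_of_dvd_left hsq 6

lemma sq_dvd_twelve_mul_dedekindSumNum_add {a b c d : ℤ} (h : a * d - b * c = 1) (hc : 0 < c) :
    c ^ 2 ∣ 12 * dedekindSumNum (-d) c + (a + d) * c := by
  have hcong := sq_dvd_sub_twelve_mul_dedekindSumNum (h := -d) hc ⟨-a, -b, by linear_combination h⟩
  have hcd : IsCoprime (c ^ 2) d := IsCoprime.pow_left ⟨-b, a, by linear_combination h⟩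
  refine hcd.dvd_of_dvd_mul_left ?_
  have hkey : d * (12 * dedekindSumNum (-d) c + (a + d) * c)
      = ((-d) ^ 2 + 1) * (c * (c - 1) * (2 * c - 1)) - 12 * (-d) * dedekindSumNum (-d) c
        - c ^ 2 * (d * (a + d) * (2 * c - 3) - b * (c - 1) * (2 * c - 1)) := by
    linear_combination (c + c ^ 2 * (2 * c - 3)) * h
  rw [hkey]
  exact dvd_sub hcong (dvd_mul_right _ _)

theorem omega_is_integer (a b c d : ℤ) (h : a * d - b * c = 1) (hc : 0 < c) :
    ∃ m : ℤ, ((a + d : ℝ) / c + 12 * dedekindSum (-d) c) = m := by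
  obtain ⟨m, hm⟩ := sq_dvd_twelve_mul_dedekindSumNum_add h hc
  refine ⟨m - 3 * (c - 1), ?_⟩
  have hmR : 12 * (dedekindSumNum (-d) c : ℝ) + (a + d) * c = c ^ 2 * m := by exact_mod_cast hm
  rw [dedekindSum_eq hc]
  push_cast
  field_simp
  linear_combination 4 * hmR
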